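/- Let β ∈ (0,1), let n ≥ 2 be a natural number, and let c₁, c₂ be real constants. Define u(η,t) = E_β(−t^β)·(c₁·log(tanh(η/2)) + c₂)^(1/n), where E_β(x) = Σ_{k=0}^∞ x^k / Γ(βk + 1) is the one-parameter Mittag-Leffler function. Then for every η > 0 and every t > 0 with c₁·log(tanh(η/2)) + c₂ > 0, u satisfies the nonlinear time-fractional diffusion equation (1/Γ(1−β)) · ∫_0^t (t−τ)^(−β) · ∂u/∂τ (η,τ) dτ = (1/sinh η)·∂/∂η[ sinh η · ∂/∂η ( u(η,t)ⁿ ) ] − u(η,t). -/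

import Mathlib

/-!
Separation of variables. In time, `E_β(a t^β)` is an eigenfunction of the Caputo derivative with
eigenvalue `a`: differentiating the Mittag-Leffler series termwise and integrating each term
against `(t - τ)^(-β)` by the Beta integral shifts the series back by one index. In space,
`uⁿ = E_β(-t^β)ⁿ (c₁ log tanh(η/2) + c₂)` and `log tanh(η/2)` has derivative `1 / sinh η`, so
it is annihilated by the radial hyperbolic Laplacian. Both sides of the equation are therefore
`-u`.
-/

open Real MeasureTheory Filter Topology
open scoped Nat

noncomputable def mittagLeffler (β x : ℝ) : ℝ := ∑' k : ℕ, x ^ k / Gamma (β * k + 1)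

lemma factorial_floor_le_Gamma_add_one {s : ℝ} (hs : 1 ≤ s) :
    (⌊s⌋₊ ! : ℝ) ≤ Gamma (s + 1) := by
  have hm : 1 ≤ ⌊s⌋₊ := Nat.le_floor (by exact_mod_cast hs)
  rw [← Gamma_nat_eq_factorial]
  refine Gamma_strictMonoOn_Ici.monotoneOn ?_ ?_ (by gcongr; exact Nat.floor_le (by linarith))
  · simp only [Set.mem_Ici]; norm_cast; omega
  · simp only [Set.mem_Ici]; linarith

lemma rpow_div_Gamma_add_one_le {y s : ℝ} (hy : 1 ≤ y) (hs : 1 ≤ s) :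
    y ^ s / Gamma (s + 1) ≤ y * exp y := by
  set m := ⌊s⌋₊
  have hpow : y ^ s ≤ y * y ^ m :=
    calc y ^ s ≤ y ^ ((m : ℝ) + 1) := rpow_le_rpow_of_exponent_le hy (Nat.lt_floor_add_one s).le
      _ = y * y ^ m := by rw [rpow_add_one (by positivity), rpow_natCast, mul_comm]
  have hexp : y ^ m ≤ exp y * m ! :=
    (div_le_iff₀ (by positivity)).1 (pow_div_factorial_le_exp y (by positivity) m)
  rw [div_le_iff₀ (Gamma_pos_of_pos (by positivity))]
  calc y ^ s ≤ y * (exp y * m !) := hpow.trans (by gcongr)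
    _ ≤ y * exp y * Gamma (s + 1) := by
      rw [← mul_assoc]; gcongr; exact factorial_floor_le_Gamma_add_one hs

lemma summable_pow_div_Gamma_of_nonneg {β r : ℝ} (hβ : 0 < β) (hr : 0 ≤ r) :
    Summable fun k : ℕ => r ^ k / Gamma (β * k + 1) := by
  set y := max 1 ((2 * r) ^ β⁻¹)
  have hy : 1 ≤ y := le_max_left _ _
  have hyβ : 2 * r ≤ y ^ β :=
    calc 2 * r = ((2 * r) ^ β⁻¹) ^ β := by
          rw [← rpow_mul (by positivity), inv_mul_cancel₀ hβ.ne', rpow_one]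
      _ ≤ y ^ β := rpow_le_rpow (by positivity) (le_max_right _ _) hβ.le
  have hbound :
      ∀ᶠ k : ℕ in atTop, ‖r ^ k / Gamma (β * k + 1)‖ ≤ y * exp y * (1 / 2) ^ k := by
    filter_upwards [(tendsto_natCast_atTop_atTop.const_mul_atTop hβ).eventually_ge_atTop 1]
      with k hk
    rw [norm_of_nonneg (by positivity)]
    calc r ^ k / Gamma (β * k + 1) ≤ (y ^ β / 2) ^ k / Gamma (β * k + 1) := by
          gcongr; linarith
      _ = (1 / 2) ^ k * (y ^ (β * k) / Gamma (β * k + 1)) := by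
          rw [rpow_mul_natCast (by positivity)]; ring
      _ ≤ (1 / 2) ^ k * (y * exp y) := by gcongr; exact rpow_div_Gamma_add_one_le hy hk
      _ = y * exp y * (1 / 2) ^ k := mul_comm _ _
  exact .of_norm_bounded_eventually_nat (summable_geometric_two.mul_left _) hbound

lemma summable_pow_div_Gamma {β : ℝ} (hβ : 0 < β) (x : ℝ) :
    Summable fun k : ℕ => x ^ k / Gamma (β * k + 1) := by
  refine .of_norm_bounded (summable_pow_div_Gamma_of_nonneg hβ (abs_nonneg x)) fun k => ?_
  rw [norm_div, norm_pow, norm_eq_abs, norm_of_nonneg (Gamma_pos_of_pos (by positivity)).le]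

lemma hasDerivAt_mittagLeffler {β : ℝ} (hβ : 0 < β) (x : ℝ) :
    HasDerivAt (mittagLeffler β)
      (∑' k : ℕ, (k + 1) * x ^ k / Gamma (β * (k + 1) + 1)) x := by
  set R := |x| + 1
  have hΓ : ∀ k : ℕ, 0 < Gamma (β * k + 1) := fun k => Gamma_pos_of_pos (by positivity)
  have hbound : ∀ (k : ℕ) (y : ℝ), y ∈ Metric.ball 0 R →
      ‖k * y ^ (k - 1) / Gamma (β * k + 1)‖ ≤ (2 * R) ^ k / Gamma (β * k + 1) := by
    intro k y hy
    rw [mem_ball_zero_iff, norm_eq_abs] at hy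
    rw [norm_div, norm_mul, norm_pow, norm_natCast, norm_eq_abs,
      norm_of_nonneg (hΓ k).le, mul_pow]
    have hnum : (k : ℝ) * |y| ^ (k - 1) ≤ 2 ^ k * R ^ k := by
      gcongr
      · exact_mod_cast Nat.lt_two_pow_self.le
      · calc |y| ^ (k - 1) ≤ R ^ (k - 1) := by gcongr
          _ ≤ R ^ k := pow_le_pow_right₀ (by linarith [abs_nonneg x]) (Nat.sub_le k 1)
    gcongr
  have hx : x ∈ Metric.ball 0 R := by rw [mem_ball_zero_iff, norm_eq_abs]; linarith
  have hdom := summable_pow_div_Gamma_of_nonneg hβ (by positivity : 0 ≤ 2 * R)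
  have key := hasDerivAt_tsum_of_isPreconnected hdom Metric.isOpen_ball
    (convex_ball 0 R).isPreconnected
    (fun k y _ => (hasDerivAt_pow k y).div_const (Gamma (β * k + 1))) hbound
    (Metric.mem_ball_self (by positivity)) (summable_pow_div_Gamma hβ 0) hx
  refine key.congr_deriv ?_
  rw [Summable.tsum_eq_zero_add (.of_norm_bounded hdom fun k => hbound k x hx)]
  simp

lemma integral_rpow_mul_sub_rpow {a b t : ℝ} (ha : 0 < a) (hb : 0 < b) (ht : 0 < t) :
    ∫ τ in (0 : ℝ)..t, τ ^ (a - 1) * (t - τ) ^ (b - 1) =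
      Gamma a * Gamma b / Gamma (a + b) * t ^ (a + b - 1) := by
  have hΓ : Complex.Gamma (a + b) ≠ 0 := by
    rw [← Complex.ofReal_add, Complex.Gamma_ofReal]
    exact_mod_cast (Gamma_pos_of_pos (add_pos ha hb)).ne'
  have hbeta : Complex.betaIntegral a b =
      Complex.Gamma a * Complex.Gamma b / Complex.Gamma (a + b) := by
    rw [Complex.Gamma_mul_Gamma_eq_betaIntegral (by simpa using ha) (by simpa using hb),
      mul_div_cancel_left₀ _ hΓ]
  apply Complex.ofReal_injective
  calc ((∫ τ in (0 : ℝ)..t, τ ^ (a - 1) * (t - τ) ^ (b - 1) : ℝ) : ℂ)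
      = ∫ τ in (0 : ℝ)..t, (τ : ℂ) ^ ((a : ℂ) - 1) * ((t : ℂ) - τ) ^ ((b : ℂ) - 1) := by
        rw [← intervalIntegral.integral_ofReal]
        refine intervalIntegral.integral_congr fun τ hτ => ?_
        rw [Set.uIcc_of_le ht.le] at hτ
        push_cast
        rw [Complex.ofReal_cpow hτ.1, Complex.ofReal_cpow (sub_nonneg.2 hτ.2)]
        push_cast
        rfl
    _ = (t : ℂ) ^ ((a : ℂ) + b - 1) * Complex.betaIntegral a b :=
        Complex.betaIntegral_scaled _ _ ht
    _ = _ := by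
        rw [hbeta, ← Complex.ofReal_add, ← Complex.ofReal_one, ← Complex.ofReal_sub,
          ← Complex.ofReal_cpow ht.le]
        simp only [Complex.Gamma_ofReal]
        push_cast
        ring

lemma intervalIntegrable_rpow_mul_sub_rpow {a b t : ℝ} (ha : 0 < a) (hb : 0 < b) (ht : 0 < t) :
    IntervalIntegrable (fun τ => τ ^ (a - 1) * (t - τ) ^ (b - 1)) volume 0 t :=
  -- a non-integrable function has integral `0`, while this one is positive
  intervalIntegral.intervalIntegrable_of_integral_ne_zero <| by
    rw [integral_rpow_mul_sub_rpow ha hb ht]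
    have := Gamma_pos_of_pos ha; have := Gamma_pos_of_pos hb
    have := Gamma_pos_of_pos (add_pos ha hb)
    positivity

lemma hasDerivAt_mittagLeffler_mul_rpow {β τ : ℝ} (hβ : 0 < β) (a : ℝ) (hτ : 0 < τ) :
    HasDerivAt (fun s => mittagLeffler β (a * s ^ β))
      (∑' k : ℕ, a ^ (k + 1) / Gamma (β * (k + 1)) * τ ^ (β * (k + 1) - 1)) τ := by
  have hinner : HasDerivAt (fun s => a * s ^ β) (a * (β * τ ^ (β - 1))) τ :=
    (hasDerivAt_rpow_const (Or.inl hτ.ne')).const_mul a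
  refine ((hasDerivAt_mittagLeffler hβ _).comp τ hinner).congr_deriv ?_
  rw [← tsum_mul_right]
  refine tsum_congr fun k => ?_
  have hβk : β * (k + 1) ≠ 0 := by positivity
  rw [Gamma_add_one hβk, mul_pow, ← rpow_mul_natCast hτ.le,
    show β * (k + 1) - 1 = β * k + (β - 1) by ring, rpow_add hτ]
  field_simp
  ring

theorem integral_sub_rpow_neg_mul_deriv_mittagLeffler {β t : ℝ} (hβ : β ∈ Set.Ioo 0 1)
    (a : ℝ) (ht : 0 < t) :
    ∫ τ in (0 : ℝ)..t, (t - τ) ^ (-β) * deriv (fun s => mittagLeffler β (a * s ^ β)) τ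
      = a * Gamma (1 - β) * mittagLeffler β (a * t ^ β) := by
  obtain ⟨hβ0, hβ1⟩ := hβ
  set w : ℕ → ℝ → ℝ := fun k τ => τ ^ (β * (k + 1) - 1) * (t - τ) ^ (-β)
  have hw : ∀ k : ℕ, IntegrableOn (w k) (Set.Ioc 0 t) ∧
      ∀ c : ℝ, ∫ τ in Set.Ioc 0 t, c ^ (k + 1) / Gamma (β * (k + 1)) * w k τ
        = c * Gamma (1 - β) * ((c * t ^ β) ^ k / Gamma (β * k + 1)) := by
    intro k
    have hβk : 0 < β * (k + 1) := by positivity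
    have hint := intervalIntegrable_rpow_mul_sub_rpow hβk (sub_pos.2 hβ1) ht
    have hval := integral_rpow_mul_sub_rpow hβk (sub_pos.2 hβ1) ht
    rw [show 1 - β - 1 = -β by ring] at hint hval
    rw [intervalIntegral.integral_of_le ht.le,
      show β * (k + 1) + (1 - β) = β * k + 1 by ring,
      show β * k + 1 - 1 = β * k by ring, rpow_mul_natCast ht.le] at hval
    refine ⟨(intervalIntegrable_iff_integrableOn_Ioc_of_le ht.le).1 hint, fun c => ?_⟩
    have hΓ : Gamma (β * (k + 1)) ≠ 0 := (Gamma_pos_of_pos hβk).ne'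
    rw [integral_const_mul, hval, mul_pow]
    field_simp
    ring
  have hsum : Summable fun k : ℕ =>
      ∫ τ in Set.Ioc 0 t, ‖a ^ (k + 1) / Gamma (β * (k + 1)) * w k τ‖ := by
    have hnorm : ∀ k : ℕ,
        ∫ τ in Set.Ioc 0 t, ‖a ^ (k + 1) / Gamma (β * (k + 1)) * w k τ‖
        = |a| * Gamma (1 - β) * ((|a| * t ^ β) ^ k / Gamma (β * k + 1)) := by
      intro k
      rw [← (hw k).2 |a|]
      refine setIntegral_congr_fun measurableSet_Ioc fun τ hτ => ?_
      rw [norm_mul, norm_div, norm_pow, norm_eq_abs,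
        norm_of_nonneg (Gamma_pos_of_pos (by positivity)).le,
        norm_of_nonneg (mul_nonneg (rpow_nonneg hτ.1.le _) (rpow_nonneg (sub_nonneg.2 hτ.2) _))]
    simpa only [hnorm] using (summable_pow_div_Gamma hβ0 _).mul_left _
  calc ∫ τ in (0 : ℝ)..t, (t - τ) ^ (-β) * deriv (fun s => mittagLeffler β (a * s ^ β)) τ
      = ∫ τ in Set.Ioc 0 t, ∑' k : ℕ, a ^ (k + 1) / Gamma (β * (k + 1)) * w k τ := by
        rw [intervalIntegral.integral_of_le ht.le]
        refine setIntegral_congr_fun measurableSet_Ioc fun τ hτ => ?_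
        rw [(hasDerivAt_mittagLeffler_mul_rpow hβ0 a hτ.1).deriv, ← tsum_mul_left]
        exact tsum_congr fun k => by ring
    _ = ∑' k : ℕ, ∫ τ in Set.Ioc 0 t, a ^ (k + 1) / Gamma (β * (k + 1)) * w k τ :=
        (integral_tsum_of_summable_integral_norm (fun k => (hw k).1.const_mul _) hsum).symm
    _ = a * Gamma (1 - β) * mittagLeffler β (a * t ^ β) := by
        simp only [fun k => (hw k).2 a]
        exact tsum_mul_left

lemma hasDerivAt_tanh (x : ℝ) : HasDerivAt tanh (1 / cosh x ^ 2) x := by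
  have h := (hasDerivAt_sinh x).div (hasDerivAt_cosh x) (cosh_pos x).ne'
  rw [show sinh / cosh = tanh from funext fun y => (tanh_eq_sinh_div_cosh y).symm] at h
  refine h.congr_deriv ?_
  rw [← cosh_sq_sub_sinh_sq x]
  ring

lemma hasDerivAt_log_tanh_half {s : ℝ} (hs : s ≠ 0) :
    HasDerivAt (fun r => log (tanh (r / 2))) (1 / sinh s) s := by
  have hsinh : sinh (s / 2) ≠ 0 := sinh_ne_zero.2 (by positivity)
  have hcosh : cosh (s / 2) ≠ 0 := (cosh_pos _).ne'
  have htanh : tanh (s / 2) ≠ 0 := by rw [tanh_eq_sinh_div_cosh]; exact div_ne_zero hsinh hcosh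
  refine (((hasDerivAt_log htanh).comp _ (hasDerivAt_tanh _)).comp s
    ((hasDerivAt_id s).div_const 2)).congr_deriv ?_
  rw [show s = 2 * (s / 2) by ring, sinh_two_mul, tanh_eq_sinh_div_cosh]
  field_simp

lemma deriv_sinh_mul_deriv_eq_zero {f : ℝ → ℝ} {a b η : ℝ} (hη : η ≠ 0)
    (hf : f =ᶠ[𝓝 η] fun r => a * log (tanh (r / 2)) + b) :
    deriv (fun s => sinh s * deriv f s) η = 0 := by
  have hconst : (fun s => sinh s * deriv f s) =ᶠ[𝓝 η] fun _ => a := by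
    filter_upwards [hf.eventuallyEq_nhds, eventually_ne_nhds hη] with s hfs hs
    rw [hfs.deriv_eq, (((hasDerivAt_log_tanh_half hs).const_mul a).add_const b).deriv]
    field_simp [sinh_ne_zero.2 hs]
  rw [hconst.deriv_eq, deriv_const]

/-- `u(η,t) = E_β(-t^β)·(c₁ log(tanh(η/2)) + c₂)^(1/n)` solves the nonlinear
time-fractional diffusion equation `∂_t^β u = Δ_H(uⁿ) - u` (Caputo derivative)
for `η > 0`, `t > 0`, where the radicand is positive. -/
theorem stmt_4 (β : ℝ) (hβ : β ∈ Set.Ioo (0 : ℝ) 1) (n : ℕ) (hn : 2 ≤ n)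
    (c₁ c₂ : ℝ)
    (E : ℝ → ℝ) (hE : ∀ x : ℝ, E x = ∑' k : ℕ, x ^ k / Real.Gamma (β * k + 1))
    (u : ℝ → ℝ → ℝ)
    (hu : ∀ η t : ℝ, u η t =
      E (-(t ^ β)) * (c₁ * Real.log (Real.tanh (η / 2)) + c₂) ^ ((1 : ℝ) / n)) :
    ∀ η t : ℝ, 0 < η → 0 < t → 0 < c₁ * Real.log (Real.tanh (η / 2)) + c₂ →
      (1 / Real.Gamma (1 - β)) *
        ∫ τ in (0 : ℝ)..t, (t - τ) ^ (-β) * deriv (fun s : ℝ => u η s) τ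
      = (1 / Real.sinh η) *
          deriv (fun s : ℝ => Real.sinh s * deriv (fun r : ℝ => (u r t) ^ n) s) η
        - u η t := by
  intro η t hη ht hW
  have hu' : ∀ r s, u r s =
      mittagLeffler β (-1 * s ^ β) * (c₁ * log (tanh (r / 2)) + c₂) ^ ((1 : ℝ) / n) := by
    intro r s
    rw [hu, hE, neg_one_mul, mittagLeffler]
  have htime : ∫ τ in (0 : ℝ)..t, (t - τ) ^ (-β) * deriv (fun s => u η s) τ
      = -1 * Gamma (1 - β) * u η t := by
    simp_rw [hu', deriv_mul_const_field, ← mul_assoc, intervalIntegral.integral_mul_const,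
      integral_sub_rpow_neg_mul_deriv_mittagLeffler hβ (-1) ht]
  have hspace : deriv (fun s => sinh s * deriv (fun r => u r t ^ n) s) η = 0 := by
    refine deriv_sinh_mul_deriv_eq_zero (a := E (-(t ^ β)) ^ n * c₁)
      (b := E (-(t ^ β)) ^ n * c₂) hη.ne' ?_
    have hcont : ContinuousAt (fun r => c₁ * log (tanh (r / 2)) + c₂) η :=
      (((hasDerivAt_log_tanh_half hη.ne').const_mul c₁).add_const c₂).continuousAt
    filter_upwards [hcont.eventually (lt_mem_nhds hW)] with r hr
    rw [hu, mul_pow, one_div, rpow_inv_natCast_pow hr.le (by omega)]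
    ring
  have hΓ : Gamma (1 - β) ≠ 0 := (Gamma_pos_of_pos (sub_pos.2 hβ.2)).ne'
  rw [htime, hspace]
  field_simp
  ring
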